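/- Among all C^{k+1} functions ψ on [0,1] satisfying ψ^{(α)}(0) = φ^{(α)}(0) and ψ^{(α)}(1) = φ^{(α)}(1) for 0 ≤ α ≤ k, the Hermite interpolant H of φ minimizes the functional F[ψ] = ∫_0^1 (ψ^{(k+1)}(x))^2 dx. -/

import Mathlib

/-!
Write `ψ = H + g`. The endpoint conditions say that `g` vanishes to order `k` at `0` and `1`, so
integrating by parts `k + 1` times moves every derivative in `∫ H^{(k+1)} g^{(k+1)}` onto `H`,
and `H^{(2k+2)} = 0` because `deg H ≤ 2k + 1`. The cross term therefore vanishes and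
`F[ψ] = F[H] + F[g] ≥ F[H]`.
-/

open Set intervalIntegral Polynomial
open MeasureTheory (volume)

namespace Polynomial

variable {𝕜 : Type*} [NontriviallyNormedField 𝕜]

lemma contDiff_eval (p : 𝕜[X]) (n : WithTop ℕ∞) : ContDiff 𝕜 n fun x => p.eval x := by
  simpa using p.contDiff_aeval (𝕜 := 𝕜) n

lemma iteratedDeriv_eval (p : 𝕜[X]) (n : ℕ) :
    iteratedDeriv n (fun x => p.eval x) = fun x => (derivative^[n] p).eval x := by
  induction n generalizing p with
  | zero => rfl
  | succ n ih =>
    ext x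
    rw [iteratedDeriv_succ, ih, Function.iterate_succ_apply']
    exact Polynomial.deriv _

lemma iteratedDerivWithin_eval (p : 𝕜[X]) (n : ℕ) {s : Set 𝕜} (hs : UniqueDiffOn 𝕜 s) {x : 𝕜}
    (hx : x ∈ s) : iteratedDerivWithin n (fun x => p.eval x) s x = (derivative^[n] p).eval x := by
  rw [iteratedDerivWithin_eq_iteratedDeriv hs ((p.contDiff_eval n).contDiffAt) hx,
    iteratedDeriv_eval]

end Polynomial

theorem integral_eval_mul_iteratedDerivWithin_eq_zero {a b : ℝ} (hab : a < b) (p : ℝ[X]) {n : ℕ}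
    (hp : derivative^[n] p = 0) {g : ℝ → ℝ} (hg : ContDiffOn ℝ n g (Icc a b))
    (ha : ∀ j < n, iteratedDerivWithin j g (Icc a b) a = 0)
    (hb : ∀ j < n, iteratedDerivWithin j g (Icc a b) b = 0) :
    ∫ x in a..b, p.eval x * iteratedDerivWithin n g (Icc a b) x = 0 := by
  induction n generalizing p with
  | zero => simp [show p = 0 from hp]
  | succ n ih =>
    have hs : UniqueDiffOn ℝ (Icc a b) := uniqueDiffOn_Icc hab
    have hderiv : ∀ x ∈ uIcc a b, HasDerivWithinAt (iteratedDerivWithin n g (Icc a b))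
        (iteratedDerivWithin (n + 1) g (Icc a b) x) (uIcc a b) x := by
      rw [uIcc_of_le hab.le]
      intro x hx
      rw [iteratedDerivWithin_succ]
      exact (hg.differentiableOn_iteratedDerivWithin (by norm_cast; omega) hs x hx).hasDerivWithinAt
    have hcont : IntervalIntegrable (iteratedDerivWithin (n + 1) g (Icc a b)) volume a b :=
      ContinuousOn.intervalIntegrable <|
        (uIcc_of_le hab.le).symm ▸ hg.continuousOn_iteratedDerivWithin le_rfl hs
    rw [integral_mul_deriv_eq_deriv_mul_of_hasDerivWithinAt
      (fun x _ => (p.hasDerivAt x).hasDerivWithinAt) hderiv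
      (p.derivative.continuous.intervalIntegrable _ _) hcont,
      ha n n.lt_succ_self, hb n n.lt_succ_self,
      ih p.derivative hp (hg.of_le (by norm_cast; omega)) (fun j hj => ha j (by omega))
        (fun j hj => hb j (by omega))]
    simp

theorem integral_sq_le_integral_add_sq_of_integral_mul_eq_zero {a b : ℝ} (hab : a ≤ b)
    {f g : ℝ → ℝ} (hf : ContinuousOn f (Icc a b)) (hg : ContinuousOn g (Icc a b))
    (horth : ∫ x in a..b, f x * g x = 0) :
    ∫ x in a..b, f x ^ 2 ≤ ∫ x in a..b, (f x + g x) ^ 2 := by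
  rw [← uIcc_of_le hab] at hf hg
  have hf2 : IntervalIntegrable (fun x => f x ^ 2) volume a b := (hf.pow 2).intervalIntegrable
  have hfg : IntervalIntegrable (fun x => 2 * (f x * g x)) volume a b :=
    ((hf.mul hg).const_mul 2).intervalIntegrable
  have hg2 : IntervalIntegrable (fun x => g x ^ 2) volume a b :=
    (hg.pow 2).intervalIntegrable
  calc ∫ x in a..b, f x ^ 2
      ≤ (∫ x in a..b, f x ^ 2) + (2 * ∫ x in a..b, f x * g x) + ∫ x in a..b, g x ^ 2 := by
        rw [horth]
        linarith [integral_nonneg (μ := volume) hab fun x _ => sq_nonneg (g x)]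
    _ = ∫ x in a..b, (f x + g x) ^ 2 := by
        rw [← integral_const_mul, ← integral_add hf2 hfg,
          ← integral_add (hf2.add hfg) hg2]
        exact integral_congr fun x _ => by ring

theorem hermite_interpolant_minimizes_general (k : ℕ) (φ : ℝ → ℝ)
    (H : Polynomial ℝ) (hdeg : H.natDegree ≤ 2 * k + 1)
    (h0 : ∀ α ≤ k, iteratedDeriv α (fun t => H.eval t) 0 =
        iteratedDerivWithin α φ (Set.Icc 0 1) 0)
    (h1 : ∀ α ≤ k, iteratedDeriv α (fun t => H.eval t) 1 =
        iteratedDerivWithin α φ (Set.Icc 0 1) 1) :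
    ∀ ψ : ℝ → ℝ, ContDiffOn ℝ (k + 1 : ℕ) ψ (Set.Icc 0 1) →
      (∀ α ≤ k, iteratedDerivWithin α ψ (Set.Icc 0 1) 0 =
          iteratedDerivWithin α φ (Set.Icc 0 1) 0) →
      (∀ α ≤ k, iteratedDerivWithin α ψ (Set.Icc 0 1) 1 =
          iteratedDerivWithin α φ (Set.Icc 0 1) 1) →
      (∫ x in (0 : ℝ)..1, (iteratedDeriv (k + 1) (fun t => H.eval t) x) ^ 2) ≤
        ∫ x in (0 : ℝ)..1, (iteratedDerivWithin (k + 1) ψ (Set.Icc 0 1) x) ^ 2 := by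
  intro ψ hψ hψ0 hψ1
  have hs : UniqueDiffOn ℝ (Icc (0 : ℝ) 1) := uniqueDiffOn_Icc_zero_one
  set g := ψ - fun t => H.eval t
  have hg : ContDiffOn ℝ (k + 1 : ℕ) g (Icc 0 1) := hψ.sub (H.contDiff_eval _).contDiffOn
  have hgψ : ∀ n ≤ k + 1, ∀ x ∈ Icc (0 : ℝ) 1, iteratedDerivWithin n g (Icc 0 1) x =
      iteratedDerivWithin n ψ (Icc 0 1) x - (derivative^[n] H).eval x := fun n hn x hx => by
    rw [iteratedDerivWithin_sub hx hs (hψ.of_le (by exact_mod_cast hn) x hx)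
      (H.contDiff_eval n).contDiffWithinAt, H.iteratedDerivWithin_eval n hs hx]
  have hg0 : ∀ j < k + 1, iteratedDerivWithin j g (Icc 0 1) 0 = 0 := fun j hj => by
    rw [hgψ j hj.le 0 (left_mem_Icc.2 zero_le_one), hψ0 j (by omega), ← h0 j (by omega),
      H.iteratedDeriv_eval, sub_self]
  have hg1 : ∀ j < k + 1, iteratedDerivWithin j g (Icc 0 1) 1 = 0 := fun j hj => by
    rw [hgψ j hj.le 1 (right_mem_Icc.2 zero_le_one), hψ1 j (by omega), ← h1 j (by omega),
      H.iteratedDeriv_eval, sub_self]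
  have hvanish : derivative^[k + 1] (derivative^[k + 1] H) = 0 := by
    rw [← Function.iterate_add_apply]
    exact iterate_derivative_eq_zero (by omega)
  rw [H.iteratedDeriv_eval]
  calc ∫ x in (0 : ℝ)..1, (derivative^[k + 1] H).eval x ^ 2
      ≤ ∫ x in (0 : ℝ)..1,
          ((derivative^[k + 1] H).eval x + iteratedDerivWithin (k + 1) g (Icc 0 1) x) ^ 2 :=
        integral_sq_le_integral_add_sq_of_integral_mul_eq_zero zero_le_one
          (Polynomial.continuous _).continuousOn (hg.continuousOn_iteratedDerivWithin le_rfl hs)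
          (integral_eval_mul_iteratedDerivWithin_eq_zero one_pos _ hvanish hg hg0 hg1)
    _ = ∫ x in (0 : ℝ)..1, (iteratedDerivWithin (k + 1) ψ (Icc 0 1) x) ^ 2 :=
        integral_congr fun x hx => by
          rw [hgψ (k + 1) le_rfl x (by rwa [uIcc_of_le zero_le_one] at hx)]
          ring

/-- Among all `C^{k+1}` functions `ψ` on `[0,1]` with the same Hermite endpoint data as
`φ` (derivatives of orders `0,…,k` at `0` and `1`), the Hermite interpolant `H` of `φ`
minimizes the stability functional `F[ψ] = ∫_0^1 (ψ^{(k+1)})^2`. -/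
theorem hermite_interpolant_minimizes (k : ℕ) (φ : ℝ → ℝ)
    (hφ : ContDiffOn ℝ (k + 1 : ℕ) φ (Set.Icc 0 1))
    (H : Polynomial ℝ) (hdeg : H.natDegree ≤ 2 * k + 1)
    (h0 : ∀ α ≤ k, iteratedDeriv α (fun t => H.eval t) 0 =
        iteratedDerivWithin α φ (Set.Icc 0 1) 0)
    (h1 : ∀ α ≤ k, iteratedDeriv α (fun t => H.eval t) 1 =
        iteratedDerivWithin α φ (Set.Icc 0 1) 1) :
    ∀ ψ : ℝ → ℝ, ContDiffOn ℝ (k + 1 : ℕ) ψ (Set.Icc 0 1) →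
      (∀ α ≤ k, iteratedDerivWithin α ψ (Set.Icc 0 1) 0 =
          iteratedDerivWithin α φ (Set.Icc 0 1) 0) →
      (∀ α ≤ k, iteratedDerivWithin α ψ (Set.Icc 0 1) 1 =
          iteratedDerivWithin α φ (Set.Icc 0 1) 1) →
      (∫ x in (0 : ℝ)..1, (iteratedDeriv (k + 1) (fun t => H.eval t) x) ^ 2) ≤
        ∫ x in (0 : ℝ)..1, (iteratedDerivWithin (k + 1) ψ (Set.Icc 0 1) x) ^ 2 :=
  hermite_interpolant_minimizes_general k φ H hdeg h0 h1
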